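/- Recursive mixture-weight update (Eq. 6 of the paper, proved in the appendix): for every time t, every action sequence a₀,…,a_t, every observation sequence o₁,…,o_{t+1} and every state sequence s₀,…,s_{t+1} such that the full history H_{t+1} has nonzero probability, the mixture weight satisfies p(s_{0:t+1} | h_{t+1}) = p(s_{0:t} | h_t) · p(s_{t+1}, o_{t+1} | H_t, a_t) / p(o_{t+1} | h_t, a_t), where p(o_{t+1} | h_t, a_t) = [∑_{D, s_{0:t+1}} P(D, H_{t+1})] / [∑_{D, s_{0:t}} P(D, H_t)]. -/

import Mathlib

open scoped ENNReal BigOperators Classical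

variable {S A O 𝔇 : Type*}
  [Fintype S] [Nonempty S] [Fintype A] [Nonempty A] [Fintype O] [Nonempty O]
  [Fintype 𝔇]

/-- Joint probability `P(D, H_t)` of a dynamics model `D` together with a full
history `H_t = (s₀,a₀,s₁,o₁,…,a_{t-1},s_t,o_t)`:
`P(D,H_t) = p_𝔇(D) · p₀(s₀) · ∏_{i=0}^{t-1} D(s_{i+1},o_{i+1} | s_i,a_i)`.
Here `s i` is `s_i`, `a i` is `a_i` and `o i` is `o_{i+1}`. -/
noncomputable def jointP (p𝔇 : PMF 𝔇) (p₀ : PMF S)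
    (dyn : 𝔇 → S → A → PMF (S × O)) (t : ℕ)
    (D : 𝔇) (s : Fin (t + 1) → S) (a : Fin t → A) (o : Fin t → O) : ℝ≥0∞ :=
  p𝔇 D * p₀ (s 0) * ∏ i : Fin t, dyn D (s i.castSucc) (a i) (s i.succ, o i)

/-- Probability of the observable history `h_t = (a₀,o₁,…,a_{t-1},o_t)`:
the joint marginalized over the dynamics model and the state sequence. -/
noncomputable def histP (p𝔇 : PMF 𝔇) (p₀ : PMF S)
    (dyn : 𝔇 → S → A → PMF (S × O)) (t : ℕ)
    (a : Fin t → A) (o : Fin t → O) : ℝ≥0∞ :=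
  ∑ D : 𝔇, ∑ s : Fin (t + 1) → S, jointP p𝔇 p₀ dyn t D s a o

/-- The belief `p(D, s_t | h_t)` over the dynamics model and current state given
the observable history. -/
noncomputable def belief (p𝔇 : PMF 𝔇) (p₀ : PMF S)
    (dyn : 𝔇 → S → A → PMF (S × O)) (t : ℕ)
    (a : Fin t → A) (o : Fin t → O) (D : 𝔇) (st : S) : ℝ≥0∞ :=
  (∑ s : Fin t → S, jointP p𝔇 p₀ dyn t D (Fin.snoc s st) a o) /
    histP p𝔇 p₀ dyn t a o

/-- The mixture weight `p(s_{0:t} | h_t)`: posterior of a state sequence given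
the observable history. -/
noncomputable def seqPost (p𝔇 : PMF 𝔇) (p₀ : PMF S)
    (dyn : 𝔇 → S → A → PMF (S × O)) (t : ℕ)
    (a : Fin t → A) (o : Fin t → O) (s : Fin (t + 1) → S) : ℝ≥0∞ :=
  (∑ D : 𝔇, jointP p𝔇 p₀ dyn t D s a o) / histP p𝔇 p₀ dyn t a o

/-- The model posterior `p(D | H_t)` given a full history. -/
noncomputable def modelPost (p𝔇 : PMF 𝔇) (p₀ : PMF S)
    (dyn : 𝔇 → S → A → PMF (S × O)) (t : ℕ)
    (s : Fin (t + 1) → S) (a : Fin t → A) (o : Fin t → O) (D : 𝔇) : ℝ≥0∞ :=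
  jointP p𝔇 p₀ dyn t D s a o / ∑ D' : 𝔇, jointP p𝔇 p₀ dyn t D' s a o

/-- The one-step predictive `p(s_{t+1}, o_{t+1} | H_t, a_t)
= ∑_D P(D,H_{t+1}) / ∑_D P(D,H_t)` where `H_{t+1} = (H_t,a_t,s_{t+1},o_{t+1})`. -/
noncomputable def predBRL (p𝔇 : PMF 𝔇) (p₀ : PMF S)
    (dyn : 𝔇 → S → A → PMF (S × O)) (t : ℕ)
    (s : Fin (t + 1) → S) (a : Fin t → A) (o : Fin t → O)
    (act : A) (s' : S) (o' : O) : ℝ≥0∞ :=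
  (∑ D : 𝔇,
      jointP p𝔇 p₀ dyn (t + 1) D (Fin.snoc s s') (Fin.snoc a act) (Fin.snoc o o')) /
    ∑ D : 𝔇, jointP p𝔇 p₀ dyn t D s a o

/-! Writing `N_t = ∑_D P(D, H_t)` and `Z_t = ∑_{D, s_{0:t}} P(D, H_t)`, the right-hand side is
`(N_t / Z_t) · (N_{t+1} / N_t) / (Z_{t+1} / Z_t)`, in which `N_t` and `Z_t` cancel. When
`N_t = 0` the cancellation fails, but then `N_{t+1} = 0` as well, since `P(D, H_{t+1})` is
`P(D, H_t)` times one transition probability, and both sides vanish in `ℝ≥0∞`. -/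

lemma ENNReal.div_eq_div_mul_div_div {x y n h : ℝ≥0∞} (hle : n ≤ h) (htop : h ≠ ⊤)
    (hzero : n = 0 → x = 0) : x / y = n / h * (x / n) / (y / h) := by
  rcases eq_or_ne n 0 with rfl | hn
  · simp [hzero rfl]
  have hh : h ≠ 0 := (pos_of_ne_zero hn |>.trans_le hle).ne'
  have hn' : n ≠ ⊤ := ne_top_of_le_ne_top htop hle
  calc x / y = x * h⁻¹ / (y * h⁻¹) :=
        (ENNReal.mul_div_mul_right x y (ENNReal.inv_ne_zero.2 htop) (ENNReal.inv_ne_top.2 hh)).symm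
    _ = n / h * (x / n) / (y / h) := by
        rw [mul_comm (n / h), ← mul_div_assoc, ENNReal.div_mul_cancel hn hn', div_eq_mul_inv x,
          div_eq_mul_inv y]

section

omit [Nonempty S] [Fintype A] [Nonempty A] [Fintype O] [Nonempty O]

variable (p𝔇 : PMF 𝔇) (p₀ : PMF S) (dyn : 𝔇 → S → A → PMF (S × O))

omit [Fintype S] [Fintype 𝔇] in
lemma jointP_snoc (t : ℕ) (D : 𝔇) (seq : Fin (t + 1) → S) (s' : S)
    (a : Fin (t + 1) → A) (o : Fin (t + 1) → O) :
    jointP p𝔇 p₀ dyn (t + 1) D (Fin.snoc seq s') a o =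
      jointP p𝔇 p₀ dyn t D seq (fun i => a i.castSucc) (fun i => o i.castSucc) *
        dyn D (seq (Fin.last t)) (a (Fin.last t)) (s', o (Fin.last t)) := by
  have hzero : (Fin.snoc seq s' : Fin (t + 2) → S) 0 = seq 0 :=
    Fin.snoc_castSucc (i := 0) ..
  simp only [jointP, Fin.prod_univ_castSucc, hzero, Fin.snoc_last, Fin.succ_castSucc,
    Fin.snoc_castSucc, Fin.succ_last, mul_assoc]

omit [Fintype S] [Fintype 𝔇] in
lemma jointP_ne_top (t : ℕ) (D : 𝔇) (s : Fin (t + 1) → S) (a : Fin t → A) (o : Fin t → O) :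
    jointP p𝔇 p₀ dyn t D s a o ≠ ⊤ :=
  ENNReal.mul_ne_top (ENNReal.mul_ne_top (p𝔇.apply_ne_top D) (p₀.apply_ne_top (s 0)))
    (ENNReal.prod_ne_top fun _ _ => PMF.apply_ne_top _ _)

lemma histP_ne_top (t : ℕ) (a : Fin t → A) (o : Fin t → O) :
    histP p𝔇 p₀ dyn t a o ≠ ⊤ :=
  ENNReal.sum_ne_top.2 fun D _ =>
    ENNReal.sum_ne_top.2 fun s _ => jointP_ne_top p𝔇 p₀ dyn t D s a o

lemma sum_jointP_le_histP (t : ℕ) (s : Fin (t + 1) → S) (a : Fin t → A) (o : Fin t → O) :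
    ∑ D, jointP p𝔇 p₀ dyn t D s a o ≤ histP p𝔇 p₀ dyn t a o :=
  Finset.sum_le_sum fun D _ =>
    Finset.single_le_sum (f := (jointP p𝔇 p₀ dyn t D · a o)) (fun _ _ => zero_le)
      (Finset.mem_univ s)

omit [Fintype S] in
lemma sum_jointP_snoc_eq_zero (t : ℕ) (seq : Fin (t + 1) → S) (s' : S)
    (a : Fin (t + 1) → A) (o : Fin (t + 1) → O)
    (h : ∑ D, jointP p𝔇 p₀ dyn t D seq (fun i => a i.castSucc) (fun i => o i.castSucc) = 0) :
    ∑ D, jointP p𝔇 p₀ dyn (t + 1) D (Fin.snoc seq s') a o = 0 := by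
  refine Finset.sum_eq_zero fun D hD => ?_
  rw [jointP_snoc, Finset.sum_eq_zero_iff.1 h D hD, zero_mul]

end

theorem recursive_mixture_weight_update_general (p𝔇 : PMF 𝔇) (p₀ : PMF S)
    (dyn : 𝔇 → S → A → PMF (S × O)) (t : ℕ)
    (a : Fin (t + 1) → A) (o : Fin (t + 1) → O)
    (seq : Fin (t + 1) → S) (s' : S) :
    seqPost p𝔇 p₀ dyn (t + 1) a o (Fin.snoc seq s') =
      seqPost p𝔇 p₀ dyn t (fun i => a i.castSucc) (fun i => o i.castSucc) seq *
        predBRL p𝔇 p₀ dyn t seq (fun i => a i.castSucc) (fun i => o i.castSucc)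
          (a (Fin.last t)) s' (o (Fin.last t)) /
        (histP p𝔇 p₀ dyn (t + 1) a o /
          histP p𝔇 p₀ dyn t (fun i => a i.castSucc) (fun i => o i.castSucc)) := by
  rw [seqPost, seqPost, predBRL, ← Fin.init_def, ← Fin.init_def (q := o), Fin.snoc_init_self,
    Fin.snoc_init_self]
  exact ENNReal.div_eq_div_mul_div_div (sum_jointP_le_histP p𝔇 p₀ dyn t seq _ _)
    (histP_ne_top p𝔇 p₀ dyn t _ _) (sum_jointP_snoc_eq_zero p𝔇 p₀ dyn t seq s' a o)

/-- **Recursive mixture-weight update (Eq. 6).** For every time `t`, actions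
`a₀,…,a_t`, observations `o₁,…,o_{t+1}` and state sequence `s₀,…,s_{t+1}` such
that the full history `H_{t+1}` has nonzero probability:
`p(s_{0:t+1}|h_{t+1}) = p(s_{0:t}|h_t) · p(s_{t+1},o_{t+1}|H_t,a_t) /
p(o_{t+1}|h_t,a_t)`, where
`p(o_{t+1}|h_t,a_t) = [∑_{D,s_{0:t+1}} P(D,H_{t+1})] / [∑_{D,s_{0:t}} P(D,H_t)]`. -/
theorem recursive_mixture_weight_update (p𝔇 : PMF 𝔇) (p₀ : PMF S)
    (dyn : 𝔇 → S → A → PMF (S × O)) (t : ℕ)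
    (a : Fin (t + 1) → A) (o : Fin (t + 1) → O)
    (seq : Fin (t + 1) → S) (s' : S)
    (hH : (∑ D : 𝔇, jointP p𝔇 p₀ dyn (t + 1) D (Fin.snoc seq s') a o) ≠ 0) :
    seqPost p𝔇 p₀ dyn (t + 1) a o (Fin.snoc seq s') =
      seqPost p𝔇 p₀ dyn t (fun i => a i.castSucc) (fun i => o i.castSucc) seq *
        predBRL p𝔇 p₀ dyn t seq (fun i => a i.castSucc) (fun i => o i.castSucc)
          (a (Fin.last t)) s' (o (Fin.last t)) /
        (histP p𝔇 p₀ dyn (t + 1) a o /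
          histP p𝔇 p₀ dyn t (fun i => a i.castSucc) (fun i => o i.castSucc)) :=
  recursive_mixture_weight_update_general p𝔇 p₀ dyn t a o seq s'
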